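/- Let n ≥ 1 and let x, y : {1,…,n} × {1,…,n} → {0,1}. In the graph Q(x,y), for all 1 ≤ i, j ≤ n: if x_{i,j} = 0 or y_{i,j} = 0, then dist(s_i, t_j) = 4; and if x_{i,j} = 1 and y_{i,j} = 1, then dist(s_i, t_j) ≥ 5. -/

import Mathlib

/-- Vertices of the `Quadratic` construction: `uA`, `uB`, and `s i`, `t i`, `t' i`,
`a i`, `a' i`, `b i`, `b' i` for `i ∈ {1, …, n}` (encoded as `Fin n`). -/
inductive QVert (n : ℕ) : Type
  | uA : QVert n
  | uB : QVert n
  | s : Fin n → QVert n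
  | t : Fin n → QVert n
  | t' : Fin n → QVert n
  | a : Fin n → QVert n
  | a' : Fin n → QVert n
  | b : Fin n → QVert n
  | b' : Fin n → QVert n

/-- Edges of `Q(x, y)`: `a i ~ a' j` iff `x i j = 0`; `b i ~ b' j` iff `y i j = 0`;
`uA ~ a i`, `uA ~ a' i`, `uB ~ b i`, `uB ~ b' i`; `s i ~ a i`, `s i ~ b i`;
`t' i ~ a' i`, `t' i ~ b' i`, `t' i ~ t i`; no other edges. -/
def qRel {n : ℕ} (x y : Fin n → Fin n → Fin 2) : QVert n → QVert n → Prop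
  | .a i, .a' j => x i j = 0
  | .b i, .b' j => y i j = 0
  | .uA, .a _ => True
  | .uA, .a' _ => True
  | .uB, .b _ => True
  | .uB, .b' _ => True
  | .s i, .a j => i = j
  | .s i, .b j => i = j
  | .t' i, .a' j => i = j
  | .t' i, .b' j => i = j
  | .t' i, .t j => i = j
  | _, _ => False

/-- The `Quadratic` graph. -/
def QGraph {n : ℕ} (x y : Fin n → Fin n → Fin 2) : SimpleGraph (QVert n) :=
  SimpleGraph.fromRel (qRel x y)

/-- Potential function for lower-bounding distances to `t j`. -/
def qPot {n : ℕ} (x y : Fin n → Fin n → Fin 2) (j : Fin n) : QVert n → ℕ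
  | .uA => 3
  | .uB => 3
  | .s k => min (if x k j = 0 then 3 else 4) (if y k j = 0 then 3 else 4) + 1
  | .t k => if k = j then 0 else 4
  | .t' k => if k = j then 1 else 3
  | .a k => if x k j = 0 then 3 else 4
  | .a' k => if k = j then 2 else 4
  | .b k => if y k j = 0 then 3 else 4
  | .b' k => if k = j then 2 else 4

lemma qPot_lip {n : ℕ} (x y : Fin n → Fin n → Fin 2) (j : Fin n) {u v : QVert n}
    (h : (QGraph x y).Adj u v) : qPot x y j u ≤ qPot x y j v + 1 := by
  rw [QGraph, SimpleGraph.fromRel_adj] at h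
  obtain ⟨-, h | h⟩ := h <;>
    cases u <;> cases v <;> simp only [qRel] at h <;>
    (try subst h) <;>
    simp only [qPot] <;> split_ifs <;> first | omega | simp_all

lemma qPot_walk {n : ℕ} (x y : Fin n → Fin n → Fin 2) (j : Fin n) {u v : QVert n}
    (w : (QGraph x y).Walk u v) : qPot x y j u ≤ qPot x y j v + w.length := by
  induction w with
  | nil => simp
  | cons h p ih =>
    have := qPot_lip x y j h
    simp only [SimpleGraph.Walk.length_cons]
    omega

theorem stmt_11 {n : ℕ} (hn : 1 ≤ n) (x y : Fin n → Fin n → Fin 2) :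
    (∀ i j : Fin n, (x i j = 0 ∨ y i j = 0) →
      (QGraph x y).dist (QVert.s i) (QVert.t j) = 4) ∧
    (∀ i j : Fin n, x i j = 1 → y i j = 1 →
      5 ≤ (QGraph x y).dist (QVert.s i) (QVert.t j)) := by
  have adj : ∀ (u v : QVert n), u ≠ v → qRel x y u v → (QGraph x y).Adj u v := by
    intro u v h1 h2
    rw [QGraph, SimpleGraph.fromRel_adj]
    exact ⟨h1, Or.inl h2⟩
  have lower : ∀ i j : Fin n, (QGraph x y).Reachable (QVert.s i) (QVert.t j) →
      qPot x y j (QVert.s i) ≤ (QGraph x y).dist (QVert.s i) (QVert.t j) := by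
    intro i j hr
    obtain ⟨w, hw⟩ := hr.exists_walk_length_eq_dist
    have h2 := qPot_walk x y j w
    have h0 : qPot x y j (QVert.t j) = 0 := by simp [qPot]
    rw [h0, hw, Nat.zero_add] at h2
    exact h2
  constructor
  · intro i j h
    have hub : (QGraph x y).dist (QVert.s i) (QVert.t j) ≤ 4 := by
      rcases h with h | h
      · let w : (QGraph x y).Walk (QVert.s i) (QVert.t j) :=
          .cons (adj (QVert.s i) (QVert.a i) (by simp) (by simp [qRel]))
            (.cons (adj (QVert.a i) (QVert.a' j) (by simp) (by simpa [qRel] using h))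
              (.cons ((adj (QVert.t' j) (QVert.a' j) (by simp) (by simp [qRel])).symm)
                (.cons (adj (QVert.t' j) (QVert.t j) (by simp) (by simp [qRel])) .nil)))
        simpa [w] using SimpleGraph.dist_le w
      · let w : (QGraph x y).Walk (QVert.s i) (QVert.t j) :=
          .cons (adj (QVert.s i) (QVert.b i) (by simp) (by simp [qRel]))
            (.cons (adj (QVert.b i) (QVert.b' j) (by simp) (by simpa [qRel] using h))
              (.cons ((adj (QVert.t' j) (QVert.b' j) (by simp) (by simp [qRel])).symm)
                (.cons (adj (QVert.t' j) (QVert.t j) (by simp) (by simp [qRel])) .nil)))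
        simpa [w] using SimpleGraph.dist_le w
    have hr : (QGraph x y).Reachable (QVert.s i) (QVert.t j) :=
      SimpleGraph.Walk.reachable
        (.cons (adj (QVert.s i) (QVert.a i) (by simp) (by simp [qRel]))
          (.cons ((adj QVert.uA (QVert.a i) (by simp) (by simp [qRel])).symm)
            (.cons (adj QVert.uA (QVert.a' j) (by simp) (by simp [qRel]))
              (.cons ((adj (QVert.t' j) (QVert.a' j) (by simp) (by simp [qRel])).symm)
                (.cons (adj (QVert.t' j) (QVert.t j) (by simp) (by simp [qRel])) .nil)))))
    have hlb := lower i j hr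
    have h4 : qPot x y j (QVert.s i) = 4 := by
      simp only [qPot]
      rcases h with h | h <;> simp [h] <;> split_ifs <;> omega
    omega
  · intro i j hx hy
    have hr : (QGraph x y).Reachable (QVert.s i) (QVert.t j) :=
      SimpleGraph.Walk.reachable
        (.cons (adj (QVert.s i) (QVert.a i) (by simp) (by simp [qRel]))
          (.cons ((adj QVert.uA (QVert.a i) (by simp) (by simp [qRel])).symm)
            (.cons (adj QVert.uA (QVert.a' j) (by simp) (by simp [qRel]))
              (.cons ((adj (QVert.t' j) (QVert.a' j) (by simp) (by simp [qRel])).symm)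
                (.cons (adj (QVert.t' j) (QVert.t j) (by simp) (by simp [qRel])) .nil)))))
    have hlb := lower i j hr
    have hx0 : ¬ x i j = 0 := by simp [hx]
    have hy0 : ¬ y i j = 0 := by simp [hy]
    simp only [qPot, if_neg hx0, if_neg hy0] at hlb
    omega
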